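/- arXiv:2012.08324 — 4 statements merged into one kernel-verified Lean document; each statement's English description precedes it below -/
import Mathlib

section
/- Let C be a 2-copula that is stochastically increasing in the first component (u ↦ C(u,v) concave for each v). Then for every 2-copula D and all u,v ∈ [0,1], the Markov product satisfies (D * C)(u,v) ≤ C(u,v), where (D * C)(u,v) = ∫₀¹ ∂₂D(u,t) · ∂₁C(t,v) dt. -/
open MeasureTheory Set Filter

def IsCopula (C : ℝ → ℝ → ℝ) : Prop :=
  (∀ u ∈ Icc (0:ℝ) 1, C u 0 = 0 ∧ C u 1 = u) ∧
  (∀ v ∈ Icc (0:ℝ) 1, C 0 v = 0 ∧ C 1 v = v) ∧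
  (∀ u₁ u₂ v₁ v₂ : ℝ, u₁ ∈ Icc (0:ℝ) 1 → u₂ ∈ Icc (0:ℝ) 1 →
    v₁ ∈ Icc (0:ℝ) 1 → v₂ ∈ Icc (0:ℝ) 1 → u₁ ≤ u₂ → v₁ ≤ v₂ →
    0 ≤ C u₂ v₂ - C u₂ v₁ - C u₁ v₂ + C u₁ v₁)

/-- Markov product of two copulas: (C₁ * C₂)(u,v) = ∫₀¹ ∂₂C₁(u,t) ∂₁C₂(t,v) dt. -/
noncomputable def MarkovProduct (C₁ C₂ : ℝ → ℝ → ℝ) (u v : ℝ) : ℝ :=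
  ∫ t in (0:ℝ)..1, deriv (fun s => C₁ u s) t * deriv (fun s => C₂ s v) t

/-- Stochastically increasing in the first component: u ↦ C(u,v) is concave for each v. -/
def StochIncr (C : ℝ → ℝ → ℝ) : Prop :=
  ∀ v ∈ Icc (0:ℝ) 1, ConcaveOn ℝ (Icc (0:ℝ) 1) (fun u => C u v)

/-- Stochastically decreasing in the first component: u ↦ C(u,v) is convex for each v. -/
def StochDecr (C : ℝ → ℝ → ℝ) : Prop :=
  ∀ v ∈ Icc (0:ℝ) 1, ConvexOn ℝ (Icc (0:ℝ) 1) (fun u => C u v)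

/-!
Write `f = ∂₂D(u, ·)` and `g = ∂₁C(·, v)`. Both take values in `[0, 1]` and `∫₀¹ f ≤ u`; by
concavity of `C(·, v)`, `g` is decreasing on its points of differentiability, which have full
measure. A weight `f` of mass at most `u` integrates a decreasing `g` to at most `∫₀ᵘ g`, the value
obtained by piling all its mass at the start, and `∫₀ᵘ g ≤ C(u, v) - C(0, v) = C(u, v)`.
-/

open Topology

lemma ae_restrict_Icc_of_ae_Ioo {a b : ℝ} {P : ℝ → Prop} (h : ∀ᵐ t, t ∈ Ioo a b → P t) :
    ∀ᵐ t ∂volume.restrict (Icc a b), P t := by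
  rw [← restrict_Ioo_eq_restrict_Icc]
  exact (ae_restrict_iff' measurableSet_Ioo).2 h

/-- Bathtub principle: pointwise `(f t - 𝟙[t < u]) (g t - c) ≤ 0`, and `c ≥ 0` absorbs the
mass defect `u - a - ∫ f`. -/
theorem integral_mul_le_integral_of_threshold {f g : ℝ → ℝ} {a u b c : ℝ} (hau : a ≤ u)
    (hub : u ≤ b) (hf : IntervalIntegrable f volume a b) (hg : IntervalIntegrable g volume a b)
    (hf01 : ∀ᵐ t, t ∈ Ioo a b → f t ∈ Icc 0 1) (hf_mass : ∫ t in a..b, f t ≤ u - a)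
    (hc : 0 ≤ c) (hg_le : ∀ᵐ t, t ∈ Ioo u b → g t ≤ c) (hle_g : ∀ᵐ t, t ∈ Ioo a u → c ≤ g t) :
    ∫ t in a..b, f t * g t ≤ ∫ t in a..u, g t := by
  have hfg : IntervalIntegrable (fun t => f t * g t) volume a b := by
    rw [intervalIntegrable_iff_integrableOn_Ioo_of_le (hau.trans hub)] at hf hg ⊢
    refine hg.bdd_mul (c := 1) hf.aestronglyMeasurable ?_
    filter_upwards [(ae_restrict_iff' measurableSet_Ioo).2 hf01] with t ht
    rw [Real.norm_eq_abs, abs_le]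
    exact ⟨by linarith [ht.1], ht.2⟩
  have hu : u ∈ uIcc a b := by rw [uIcc_of_le (hau.trans hub)]; exact ⟨hau, hub⟩
  have hsub₁ : uIcc a u ⊆ uIcc a b := uIcc_subset_uIcc_left hu
  have hsub₂ : uIcc u b ⊆ uIcc a b := uIcc_subset_uIcc_right hu
  have hf_after : ∀ᵐ t, t ∈ Ioo u b → f t ∈ Icc 0 1 := by
    filter_upwards [hf01] with t ht htu using ht ⟨hau.trans_lt htu.1, htu.2⟩
  have hf_before : ∀ᵐ t, t ∈ Ioo a u → f t ∈ Icc 0 1 := by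
    filter_upwards [hf01] with t ht htu using ht ⟨htu.1, htu.2.trans_le hub⟩
  have above : ∫ t in u..b, f t * g t ≤ ∫ t in u..b, c * f t := by
    refine intervalIntegral.integral_mono_ae_restrict hub (hfg.mono_set hsub₂)
      ((hf.mono_set hsub₂).const_mul c) ?_
    filter_upwards [ae_restrict_Icc_of_ae_Ioo hg_le, ae_restrict_Icc_of_ae_Ioo hf_after]
      with t hgt hft
    nlinarith [hft.1]
  have below : ∫ t in a..u, c * (1 - f t) ≤ ∫ t in a..u, g t - f t * g t := by
    refine intervalIntegral.integral_mono_ae_restrict hau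
      ((intervalIntegrable_const.sub (hf.mono_set hsub₁)).const_mul c)
      ((hg.mono_set hsub₁).sub (hfg.mono_set hsub₁)) ?_
    filter_upwards [ae_restrict_Icc_of_ae_Ioo hle_g, ae_restrict_Icc_of_ae_Ioo hf_before]
      with t hgt hft
    nlinarith [hft.2]
  have hf_split := intervalIntegral.integral_add_adjacent_intervals (hf.mono_set hsub₁)
    (hf.mono_set hsub₂)
  have hfg_split := intervalIntegral.integral_add_adjacent_intervals (hfg.mono_set hsub₁)
    (hfg.mono_set hsub₂)
  rw [intervalIntegral.integral_const_mul] at above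
  rw [intervalIntegral.integral_const_mul, intervalIntegral.integral_sub intervalIntegrable_const
    (hf.mono_set hsub₁), intervalIntegral.integral_sub (hg.mono_set hsub₁) (hfg.mono_set hsub₁),
    intervalIntegral.integral_const, smul_eq_mul, mul_one] at below
  linear_combination above + below + mul_le_mul_of_nonneg_left hf_mass hc - hfg_split + c * hf_split

lemma AntitoneOn.exists_threshold {g : ℝ → ℝ} {S : Set ℝ} (hg : AntitoneOn g S)
    (hg01 : MapsTo g S (Icc 0 1)) (u : ℝ) :
    ∃ c, 0 ≤ c ∧ (∀ t ∈ S, u < t → g t ≤ c) ∧ ∀ t ∈ S, t < u → c ≤ g t := by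
  have hbdd : BddAbove (insert 0 (g '' (S ∩ Ioi u))) := by
    refine ⟨1, ?_⟩
    rintro _ (rfl | ⟨t, ht, rfl⟩)
    exacts [zero_le_one, (hg01 ht.1).2]
  refine ⟨sSup (insert 0 (g '' (S ∩ Ioi u))), le_csSup hbdd (mem_insert _ _),
    fun t ht htu => le_csSup hbdd (mem_insert_of_mem _ ⟨t, ⟨ht, htu⟩, rfl⟩), ?_⟩
  intro s hs hsu
  refine csSup_le (insert_nonempty _ _) ?_
  rintro _ (rfl | ⟨t, ⟨ht, hut⟩, rfl⟩)
  exacts [(hg01 hs).1, hg hs ht (hsu.trans hut).le]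

lemma ConcaveOn.antitoneOn_deriv_of_differentiableAt {f : ℝ → ℝ} {S : Set ℝ}
    (hfc : ConcaveOn ℝ S f) : AntitoneOn (deriv f) {x ∈ S | DifferentiableAt ℝ f x} := by
  rintro x ⟨hx, hfx⟩ y ⟨hy, hfy⟩ hxy
  rcases hxy.eq_or_lt with rfl | hxy
  · rfl
  exact (hfc.deriv_le_slope hx hy hxy hfy).trans (hfc.slope_le_deriv hx hy hxy hfx)

lemma deriv_mem_Icc_of_monotoneOn {φ : ℝ → ℝ} {s : Set ℝ} {x : ℝ} (hφ : MonotoneOn φ s)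
    (hφ' : MonotoneOn (fun t => t - φ t) s) (hs : s ∈ 𝓝 x) : deriv φ x ∈ Icc 0 1 := by
  constructor
  · rw [← derivWithin_of_mem_nhds hs]
    exact hφ.derivWithin_nonneg
  by_cases hd : DifferentiableAt ℝ φ x
  · have hψ : HasDerivAt (fun t => t - φ t) (1 - deriv φ x) x :=
      (hasDerivAt_id' x).sub hd.hasDerivAt
    have := hφ'.derivWithin_nonneg (x := x)
    rw [derivWithin_of_mem_nhds hs, hψ.deriv] at this
    linarith
  · rw [deriv_zero_of_not_differentiableAt hd]
    exact zero_le_one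

namespace IsCopula

variable {C : ℝ → ℝ → ℝ}

lemma flip (hC : IsCopula C) : IsCopula (flip C) :=
  ⟨hC.2.1, hC.1, fun u₁ u₂ v₁ v₂ hu₁ hu₂ hv₁ hv₂ hu hv => by
    simpa only [Function.flip_def, sub_add_eq_add_sub, sub_right_comm] using
      hC.2.2 v₁ v₂ u₁ u₂ hv₁ hv₂ hu₁ hu₂ hv hu⟩

variable {u : ℝ}

/-- The rectangles `[0, u] × [s, t]` and `[u, 1] × [s, t]` have nonnegative `C`-volume. -/
lemma sub_mem_Icc (hC : IsCopula C) (hu : u ∈ Icc 0 1) {s t : ℝ} (hs : s ∈ Icc 0 1)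
    (ht : t ∈ Icc 0 1) (hst : s ≤ t) : C u t - C u s ∈ Icc 0 (t - s) := by
  obtain ⟨-, hB, hinc⟩ := hC
  have h₀ := hinc 0 u s t (left_mem_Icc.2 zero_le_one) hu hs ht hu.1 hst
  have h₁ := hinc u 1 s t hu (right_mem_Icc.2 zero_le_one) hs ht hu.2 hst
  rw [(hB s hs).1, (hB t ht).1] at h₀
  rw [(hB s hs).2, (hB t ht).2] at h₁
  constructor <;> linarith

lemma monotoneOn (hC : IsCopula C) (hu : u ∈ Icc 0 1) : MonotoneOn (fun t => C u t) (Icc 0 1) :=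
  fun _s hs _t ht hst => sub_nonneg.1 (hC.sub_mem_Icc hu hs ht hst).1

lemma monotoneOn_sub (hC : IsCopula C) (hu : u ∈ Icc 0 1) :
    MonotoneOn (fun t => t - C u t) (Icc 0 1) :=
  fun _s hs _t ht hst => by linarith [(hC.sub_mem_Icc hu hs ht hst).2]

lemma deriv_mem_Icc (hC : IsCopula C) (hu : u ∈ Icc 0 1) {t : ℝ} (ht : t ∈ Ioo 0 1) :
    deriv (fun s => C u s) t ∈ Icc 0 1 :=
  deriv_mem_Icc_of_monotoneOn (hC.monotoneOn hu) (hC.monotoneOn_sub hu) (Icc_mem_nhds ht.1 ht.2)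

lemma intervalIntegrable_deriv (hC : IsCopula C) (hu : u ∈ Icc 0 1) {a b : ℝ}
    (ha : a ∈ Icc 0 1) (hb : b ∈ Icc 0 1) :
    IntervalIntegrable (deriv fun s => C u s) volume a b :=
  ((hC.monotoneOn hu).mono (uIcc_subset_Icc ha hb)).intervalIntegrable_deriv

lemma integral_deriv_le (hC : IsCopula C) (hu : u ∈ Icc 0 1) {b : ℝ} (hb : b ∈ Icc 0 1) :
    ∫ t in (0:ℝ)..b, deriv (fun s => C u s) t ≤ C u b := by
  have h₀ : (0:ℝ) ∈ Icc 0 1 := left_mem_Icc.2 zero_le_one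
  have h := ((hC.monotoneOn hu).mono (uIcc_subset_Icc h₀ hb)).intervalIntegral_deriv_mem_uIcc
  rw [uIcc_of_le (sub_nonneg.2 (hC.monotoneOn hu h₀ hb hb.1))] at h
  simpa only [(hC.1 u hu).1, sub_zero] using h.2

lemma ae_differentiableAt (hC : IsCopula C) (hu : u ∈ Icc 0 1) :
    ∀ᵐ t, t ∈ Ioo 0 1 → DifferentiableAt ℝ (fun s => C u s) t := by
  filter_upwards [((hC.monotoneOn hu).mono Ioo_subset_Icc_self).ae_differentiableWithinAt_of_mem]
    with t ht ht01 using (ht ht01).differentiableAt (isOpen_Ioo.mem_nhds ht01)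

end IsCopula

theorem markovProduct_le_of_stochIncr (C : ℝ → ℝ → ℝ) (hC : IsCopula C) (hSI : StochIncr C) :
    ∀ D : ℝ → ℝ → ℝ, IsCopula D →
      ∀ u ∈ Icc (0:ℝ) 1, ∀ v ∈ Icc (0:ℝ) 1, MarkovProduct D C u v ≤ C u v := by
  intro D hD u hu v hv
  have h₀ : (0:ℝ) ∈ Icc 0 1 := left_mem_Icc.2 zero_le_one
  have h₁ : (1:ℝ) ∈ Icc 0 1 := right_mem_Icc.2 zero_le_one
  set S := {t ∈ Ioo (0:ℝ) 1 | DifferentiableAt ℝ (fun s => C s v) t}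
  have hS : ∀ᵐ t, t ∈ Ioo 0 1 → t ∈ S := by
    filter_upwards [hC.flip.ae_differentiableAt hv] with t ht ht01 using ⟨ht01, ht ht01⟩
  have hS_sub : S ⊆ {t ∈ Icc 0 1 | DifferentiableAt ℝ (fun s => C s v) t} :=
    fun t ht => ⟨Ioo_subset_Icc_self ht.1, ht.2⟩
  obtain ⟨c, hc, hc_after, hc_before⟩ :=
    ((hSI v hv).antitoneOn_deriv_of_differentiableAt.mono hS_sub).exists_threshold
      (fun t ht => hC.flip.deriv_mem_Icc hv ht.1) u
  have hD_mass : ∫ t in (0:ℝ)..1, deriv (fun s => D u s) t ≤ u - 0 := by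
    simpa only [(hD.1 u hu).2, sub_zero] using hD.integral_deriv_le hu h₁
  calc MarkovProduct D C u v ≤ ∫ t in (0:ℝ)..u, deriv (fun s => C s v) t := by
        refine integral_mul_le_integral_of_threshold hu.1 hu.2
          (hD.intervalIntegrable_deriv hu h₀ h₁) (hC.flip.intervalIntegrable_deriv hv h₀ h₁)
          (.of_forall fun t => hD.deriv_mem_Icc hu) hD_mass hc ?_ ?_
        · filter_upwards [hS] with t ht htu
          exact hc_after t (ht ⟨hu.1.trans_lt htu.1, htu.2⟩) htu.1
        · filter_upwards [hS] with t ht htu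
          exact hc_before t (ht ⟨htu.1, htu.2.trans_le hu.2⟩) htu.2
    _ ≤ C u v := hC.flip.integral_deriv_le hv hu
end

section
/- Let C be a 2-copula that is stochastically decreasing in the first component (u ↦ C(u,v) convex for each v). Then for every 2-copula D and all u,v ∈ [0,1], C(u,v) ≤ (D * C)(u,v), where * denotes the Markov product. -/
open MeasureTheory Set Filter

/-!
The sections `g = C(·, v)` and `φ = D(u, ·)` of copulas are nondecreasing and 1-Lipschitz, so
they are absolutely continuous: `C(u, v) = ∫₀ᵘ g'`, while `(D * C)(u, v) = ∫₀¹ φ' g'` with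
`0 ≤ φ' ≤ 1` and `∫₀¹ φ' = u`. Convexity of `g` makes `g'` nondecreasing, so for some level `c`
we have `g' ≤ c` on `[0, u]` and `g' ≥ c` on `[u, 1]`. Replacing the weight `1_[0,u]` by `φ'`,
of the same mass, moves weight to where `g'` is larger, so it cannot decrease the integral.
-/

open scoped NNReal Topology

lemma deriv_mem_Icc_of_monotoneOn_of_lipschitzOnWith {f : ℝ → ℝ} {s : Set ℝ} {x : ℝ}
    {K : ℝ≥0} (hs : s ∈ 𝓝 x) (hmono : MonotoneOn f s) (hlip : LipschitzOnWith K f s) :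
    deriv f x ∈ Icc 0 (K : ℝ) :=
  ⟨(derivWithin_of_mem_nhds (f := f) hs).symm ▸ hmono.derivWithin_nonneg,
    (Real.le_norm_self _).trans (norm_deriv_le_of_lipschitzOn hs hlip)⟩

namespace IsCopula

variable {C : ℝ → ℝ → ℝ}

lemma swap (hC : IsCopula C) : IsCopula (fun u v => C v u) := by
  obtain ⟨hbot, hleft, hrect⟩ := hC
  refine ⟨hleft, hbot, fun u₁ u₂ v₁ v₂ hu₁ hu₂ hv₁ hv₂ hu hv => ?_⟩
  linarith [hrect v₁ v₂ u₁ u₂ hv₁ hv₂ hu₁ hu₂ hv hu]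

lemma monotoneOn_left (hC : IsCopula C) {v : ℝ} (hv : v ∈ Icc (0:ℝ) 1) :
    MonotoneOn (fun u => C u v) (Icc 0 1) := by
  intro u₁ hu₁ u₂ hu₂ hu
  have h0 : (0:ℝ) ∈ Icc (0:ℝ) 1 := ⟨le_rfl, zero_le_one⟩
  linarith [hC.2.2 u₁ u₂ 0 v hu₁ hu₂ h0 hv hu hv.1, (hC.1 u₁ hu₁).1, (hC.1 u₂ hu₂).1]

lemma sub_le_of_le_left (hC : IsCopula C) {u₁ u₂ v : ℝ} (hu₁ : u₁ ∈ Icc (0:ℝ) 1)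
    (hu₂ : u₂ ∈ Icc (0:ℝ) 1) (hv : v ∈ Icc (0:ℝ) 1) (hu : u₁ ≤ u₂) :
    C u₂ v - C u₁ v ≤ u₂ - u₁ := by
  have h1 : (1:ℝ) ∈ Icc (0:ℝ) 1 := ⟨zero_le_one, le_rfl⟩
  linarith [hC.2.2 u₁ u₂ v 1 hu₁ hu₂ hv h1 hu hv.2, (hC.1 u₁ hu₁).2, (hC.1 u₂ hu₂).2]

lemma lipschitzOnWith_left (hC : IsCopula C) {v : ℝ} (hv : v ∈ Icc (0:ℝ) 1) :
    LipschitzOnWith 1 (fun u => C u v) (Icc 0 1) := by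
  refine LipschitzOnWith.of_le_add fun u₁ hu₁ u₂ hu₂ => ?_
  rw [Real.dist_eq]
  rcases le_total u₁ u₂ with hu | hu
  · linarith [hC.monotoneOn_left hv hu₁ hu₂ hu, abs_nonneg (u₁ - u₂)]
  · linarith [hC.sub_le_of_le_left hu₂ hu₁ hv hu, le_abs_self (u₁ - u₂)]

lemma deriv_left_mem_Icc (hC : IsCopula C) {v t : ℝ} (hv : v ∈ Icc (0:ℝ) 1)
    (ht : t ∈ Ioo (0:ℝ) 1) : deriv (fun u => C u v) t ∈ Icc (0:ℝ) 1 := by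
  simpa using deriv_mem_Icc_of_monotoneOn_of_lipschitzOnWith (Icc_mem_nhds ht.1 ht.2)
    (hC.monotoneOn_left hv) (hC.lipschitzOnWith_left hv)

end IsCopula

namespace ConvexOn

variable {g : ℝ → ℝ} {K : ℝ≥0} {a b u : ℝ}

lemma exists_deriv_le_and_le_deriv (hconv : ConvexOn ℝ (Icc a b) g)
    (hlip : LipschitzOnWith K g (Icc a b)) (hu : u ∈ Icc a b) :
    ∃ c, (∀ t ∈ Ioo a u, DifferentiableAt ℝ g t → deriv g t ≤ c) ∧
      ∀ t ∈ Ioo u b, DifferentiableAt ℝ g t → c ≤ deriv g t := by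
  have hbound : ∀ t ∈ Ioo a b, |deriv g t| ≤ K := fun t ht =>
    norm_deriv_le_of_lipschitzOn (Icc_mem_nhds ht.1 ht.2) hlip
  rcases eq_or_lt_of_le hu.1 with rfl | hau
  · exact ⟨-K, by simp, fun t ht _ => (abs_le.1 (hbound t ht)).1⟩
  rcases eq_or_lt_of_le hu.2 with rfl | hub
  · exact ⟨K, fun t ht _ => (abs_le.1 (hbound t ht)).2, by simp⟩
  -- The level is the right derivative at `u`: it is monotone on the interior and agrees with
  -- `deriv g` wherever `g` is differentiable.
  have hright : ∀ t ∈ Ioo a b, DifferentiableAt ℝ g t → deriv g t = derivWithin g (Ioi t) t :=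
    fun t _ hd => (hd.hasDerivAt.hasDerivWithinAt.derivWithin (uniqueDiffWithinAt_Ioi t)).symm
  have hmono := hconv.monotoneOn_rightDeriv
  rw [interior_Icc] at hmono
  refine ⟨derivWithin g (Ioi u) u, fun t ht hd => ?_, fun t ht hd => ?_⟩
  · rw [hright t ⟨ht.1, ht.2.trans hub⟩ hd]
    exact hmono ⟨ht.1, ht.2.trans hub⟩ ⟨hau, hub⟩ ht.2.le
  · rw [hright t ⟨hau.trans ht.1, ht.2⟩ hd]
    exact hmono ⟨hau, hub⟩ ⟨hau.trans ht.1, ht.2⟩ ht.1.le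

lemma exists_ae_deriv_le_and_le_deriv (hconv : ConvexOn ℝ (Icc a b) g)
    (hlip : LipschitzOnWith K g (Icc a b)) (hu : u ∈ Icc a b) :
    ∃ c, (∀ᵐ t ∂volume.restrict (Icc a u), deriv g t ≤ c) ∧
      ∀ᵐ t ∂volume.restrict (Icc u b), c ≤ deriv g t := by
  obtain ⟨c, hleft, hright⟩ := hconv.exists_deriv_le_and_le_deriv hlip hu
  have hdiff : ∀ᵐ t, t ∈ Icc a b → DifferentiableAt ℝ g t := by
    rw [← uIcc_of_le (hu.1.trans hu.2)] at hlip ⊢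
    exact hlip.absolutelyContinuousOnInterval.ae_differentiableAt
  refine ⟨c, ?_, ?_⟩ <;>
    rw [← Measure.restrict_congr_set Ioo_ae_eq_Icc, ae_restrict_iff' measurableSet_Ioo] <;>
    filter_upwards [hdiff] with t ht htu
  · exact hleft t htu (ht ⟨htu.1.le, htu.2.le.trans hu.2⟩)
  · exact hright t htu (ht ⟨hu.1.trans htu.1.le, htu.2.le⟩)

end ConvexOn

/-- The bathtub principle. -/
lemma intervalIntegral.integral_le_integral_mul_of_threshold {ψ h : ℝ → ℝ} {a u b c : ℝ}
    (hau : a ≤ u) (hub : u ≤ b) (hψi : IntervalIntegrable ψ volume a b)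
    (hψ : ∀ᵐ t ∂volume.restrict (Icc a b), ψ t ∈ Icc (0:ℝ) 1)
    (hψ_mass : ∫ t in a..b, ψ t = u - a) (hh : IntervalIntegrable h volume a b)
    (hleft : ∀ᵐ t ∂volume.restrict (Icc a u), h t ≤ c)
    (hright : ∀ᵐ t ∂volume.restrict (Icc u b), c ≤ h t) :
    ∫ t in a..u, h t ≤ ∫ t in a..b, ψ t * h t := by
  have hab := hau.trans hub
  have hψh : IntervalIntegrable (fun t => ψ t * h t) volume a b := by
    rw [intervalIntegrable_iff_integrableOn_Ioc_of_le hab]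
    refine ((intervalIntegrable_iff_integrableOn_Ioc_of_le hab).1 hh).bdd_mul (c := 1)
      ((intervalIntegrable_iff_integrableOn_Ioc_of_le hab).1 hψi).aestronglyMeasurable ?_
    filter_upwards [ae_restrict_of_ae_restrict_of_subset Ioc_subset_Icc_self hψ] with t ht
    rw [Real.norm_eq_abs, abs_le]
    exact ⟨by linarith [ht.1], ht.2⟩
  have hsub₁ : uIcc a u ⊆ uIcc a b := uIcc_subset_uIcc_left (by simp [uIcc_of_le hab, hau, hub])
  have hsub₂ : uIcc u b ⊆ uIcc a b := uIcc_subset_uIcc_right (by simp [uIcc_of_le hab, hau, hub])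
  have hlow : ∫ t in a..u, (h t - ψ t * h t) ≤ ∫ t in a..u, (c - c * ψ t) := by
    refine intervalIntegral.integral_mono_ae_restrict hau
      ((hh.mono_set hsub₁).sub (hψh.mono_set hsub₁))
      (intervalIntegrable_const.sub ((hψi.mono_set hsub₁).const_mul c)) ?_
    filter_upwards [hleft, ae_restrict_of_ae_restrict_of_subset (Icc_subset_Icc_right hub) hψ]
      with t hht hψt
    nlinarith [mul_nonneg (sub_nonneg.2 hht) (sub_nonneg.2 hψt.2)]
  have hhigh : ∫ t in u..b, c * ψ t ≤ ∫ t in u..b, ψ t * h t := by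
    refine intervalIntegral.integral_mono_ae_restrict hub ((hψi.mono_set hsub₂).const_mul c)
      (hψh.mono_set hsub₂) ?_
    filter_upwards [hright, ae_restrict_of_ae_restrict_of_subset (Icc_subset_Icc_left hau) hψ]
      with t hht hψt
    nlinarith [mul_nonneg (sub_nonneg.2 hht) hψt.1]
  rw [intervalIntegral.integral_sub (hh.mono_set hsub₁) (hψh.mono_set hsub₁),
    intervalIntegral.integral_sub intervalIntegrable_const ((hψi.mono_set hsub₁).const_mul c),
    intervalIntegral.integral_const, intervalIntegral.integral_const_mul, smul_eq_mul] at hlow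
  rw [intervalIntegral.integral_const_mul] at hhigh
  rw [← intervalIntegral.integral_add_adjacent_intervals (hψi.mono_set hsub₁)
    (hψi.mono_set hsub₂)] at hψ_mass
  rw [← intervalIntegral.integral_add_adjacent_intervals (hψh.mono_set hsub₁)
    (hψh.mono_set hsub₂)]
  linear_combination hlow + hhigh - c * hψ_mass

theorem le_markovProduct_of_stochDecr (C : ℝ → ℝ → ℝ) (hC : IsCopula C) (hSD : StochDecr C) :
    ∀ D : ℝ → ℝ → ℝ, IsCopula D →
      ∀ u ∈ Icc (0:ℝ) 1, ∀ v ∈ Icc (0:ℝ) 1, C u v ≤ MarkovProduct D C u v := by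
  intro D hD u hu v hv
  have h01 : uIcc (0:ℝ) 1 = Icc 0 1 := uIcc_of_le zero_le_one
  have hC_lip := hC.lipschitzOnWith_left hv
  have hD_ac : AbsolutelyContinuousOnInterval (fun t => D u t) 0 1 :=
    (h01 ▸ hD.swap.lipschitzOnWith_left hu).absolutelyContinuousOnInterval
  have hC_ac : AbsolutelyContinuousOnInterval (fun t => C t v) 0 1 :=
    (h01 ▸ hC_lip).absolutelyContinuousOnInterval
  have hD_deriv : ∀ᵐ t ∂volume.restrict (Icc 0 1), deriv (fun s => D u s) t ∈ Icc (0:ℝ) 1 := by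
    rw [← Measure.restrict_congr_set Ioo_ae_eq_Icc]
    exact ae_restrict_of_forall_mem measurableSet_Ioo fun t => hD.swap.deriv_left_mem_Icc hu
  have hD_mass : ∫ t in (0:ℝ)..1, deriv (fun s => D u s) t = u - 0 := by
    rw [hD_ac.integral_deriv_eq_sub, (hD.1 u hu).1, (hD.1 u hu).2]
  have hC_mass : ∫ t in (0:ℝ)..u, deriv (fun s => C s v) t = C u v := by
    rw [(hC_ac.mono (uIcc_subset_uIcc_left (h01 ▸ hu))).integral_deriv_eq_sub, (hC.2.1 v hv).1,
      sub_zero]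
  obtain ⟨c, hleft, hright⟩ := (hSD v hv).exists_ae_deriv_le_and_le_deriv hC_lip hu
  rw [← hC_mass]
  exact intervalIntegral.integral_le_integral_mul_of_threshold hu.1 hu.2
    hD_ac.intervalIntegrable_deriv hD_deriv hD_mass hC_ac.intervalIntegrable_deriv hleft hright
end

section
/- Let C be a 2-copula and define D(u,v) := (C⁻ * C)(u,v), where C⁻(u,v) = max(u+v−1,0) and * is the Markov product. Then ∂₁D(u,v) = ∂₁C(1−u, v) for almost all u and all v; consequently, C is stochastically increasing in the first component if and only if D is stochastically decreasing in the first component, and the map C ↦ C⁻ * C is an involution between the stochastically increasing and stochastically decreasing 2-copulas. -/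
open MeasureTheory Set Filter

/-!
For `u ∈ [0, 1]` the section `t ↦ C⁻(u, t)` has derivative `0` below `1 - u` and `1` above it, so
the Markov product `(C⁻ * F)(u, v)` integrates `∂₁F(·, v)` over `[1 - u, 1]`. When that section of
`F` is Lipschitz it is absolutely continuous, and the fundamental theorem of calculus gives
`(C⁻ * F)(u, v) = F(1, v) - F(1 - u, v)`. Sections of a copula are 1-Lipschitz, so
`(C⁻ * C)(u, v) = v - C(1 - u, v)`. Differentiating this gives the derivative identity; since
`x ↦ v - f(1 - x)` swaps concave and convex functions on `[0, 1]`, it gives the equivalence; and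
as `C⁻ * C` again has 1-Lipschitz sections, applying the formula twice returns `C`.
-/

open scoped NNReal Topology

abbrev lowerFrechet : ℝ → ℝ → ℝ := fun x y => max (x + y - 1) 0

theorem intervalIntegral.integral_indicator_Ioi {E : Type*} [NormedAddCommGroup E]
    [NormedSpace ℝ E] {f : ℝ → E} {a b c : ℝ} (hc : c ∈ Icc a b) :
    ∫ x in a..b, (Ioi c).indicator f x = ∫ x in c..b, f x := by
  rw [intervalIntegral.integral_of_le (hc.1.trans hc.2), intervalIntegral.integral_of_le hc.2,
    setIntegral_indicator measurableSet_Ioi, Ioc_inter_Ioi, max_eq_right hc.1]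

theorem deriv_lowerFrechet_right {u t : ℝ} (ht : t ≠ 1 - u) :
    deriv (lowerFrechet u) t = (Ioi (1 - u)).indicator 1 t := by
  rcases ht.lt_or_gt with h | h
  · have hW : lowerFrechet u =ᶠ[𝓝 t] fun _ => 0 := by
      filter_upwards [Iio_mem_nhds h] with s hs
      exact max_eq_right (by linarith [mem_Iio.1 hs])
    rw [hW.deriv_eq, deriv_const,
      indicator_of_notMem (show t ∉ Ioi (1 - u) from not_lt.2 h.le)]
  · have hW : lowerFrechet u =ᶠ[𝓝 t] fun s => u + s - 1 := by
      filter_upwards [Ioi_mem_nhds h] with s hs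
      exact max_eq_left (by linarith [mem_Ioi.1 hs])
    rw [hW.deriv_eq, indicator_of_mem (show t ∈ Ioi (1 - u) from h), Pi.one_apply]
    exact (((hasDerivAt_id t).const_add u).sub_const 1).deriv

theorem markovProduct_lowerFrechet_apply {F : ℝ → ℝ → ℝ} {K : ℝ≥0} {u v : ℝ}
    (hF : LipschitzOnWith K (fun s => F s v) (Icc 0 1)) (hu : u ∈ Icc (0:ℝ) 1) :
    MarkovProduct lowerFrechet F u v = F 1 v - F (1 - u) v := by
  have hu' : 1 - u ∈ Icc (0:ℝ) 1 := Icc.mem_iff_one_sub_mem.mp hu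
  have hae : ∀ᵐ t, t ∈ uIoc (0:ℝ) 1 →
      deriv (lowerFrechet u) t * deriv (fun s => F s v) t
        = (Ioi (1 - u)).indicator (deriv fun s => F s v) t := by
    filter_upwards [volume.ae_ne (1 - u)] with t ht _
    rw [deriv_lowerFrechet_right ht, ← indicator_mul_left]
    simp only [Pi.one_apply, one_mul]
  unfold MarkovProduct
  rw [intervalIntegral.integral_congr_ae hae, intervalIntegral.integral_indicator_Ioi hu']
  exact (hF.mono (uIcc_subset_Icc hu' (right_mem_Icc.2 zero_le_one)))
    |>.absolutelyContinuousOnInterval.integral_deriv_eq_sub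

theorem ConcaveOn.convexOn_const_sub_comp_one_sub {f : ℝ → ℝ}
    (hf : ConcaveOn ℝ (Icc 0 1) f) (c : ℝ) :
    ConvexOn ℝ (Icc 0 1) (fun x => c - f (1 - x)) := by
  let σ : ℝ →ᵃ[ℝ] ℝ := AffineMap.const ℝ ℝ 1 - AffineMap.id ℝ ℝ
  have hσ : σ ⁻¹' Icc 0 1 = Icc 0 1 := by
    ext x
    simp [σ, and_comm]
  have h := (hf.comp_affineMap σ).neg.add_const c
  rw [hσ] at h
  exact h.congr fun x _ => by simp [σ]; ring

theorem ConvexOn.concaveOn_const_sub_comp_one_sub {f : ℝ → ℝ}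
    (hf : ConvexOn ℝ (Icc 0 1) f) (c : ℝ) :
    ConcaveOn ℝ (Icc 0 1) (fun x => c - f (1 - x)) :=
  neg_convexOn_iff.mp <| (hf.neg.convexOn_const_sub_comp_one_sub (-c)).congr fun x _ => by
    simp only [Pi.neg_apply]; ring

namespace IsCopula

variable {C : ℝ → ℝ → ℝ} {u v : ℝ}

theorem monotoneOn_first (hC : IsCopula C) (hv : v ∈ Icc (0:ℝ) 1) :
    MonotoneOn (fun u => C u v) (Icc 0 1) := by
  intro x hx y hy hxy
  have := hC.2.2 x y 0 v hx hy (left_mem_Icc.2 zero_le_one) hv hxy hv.1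
  linarith [(hC.1 x hx).1, (hC.1 y hy).1]

theorem sub_le_of_le_first (hC : IsCopula C) (hv : v ∈ Icc (0:ℝ) 1) {x y : ℝ}
    (hx : x ∈ Icc (0:ℝ) 1) (hy : y ∈ Icc (0:ℝ) 1) (hxy : x ≤ y) : C y v - C x v ≤ y - x := by
  have := hC.2.2 x y v 1 hx hy hv (right_mem_Icc.2 zero_le_one) hxy hv.2
  linarith [(hC.1 x hx).2, (hC.1 y hy).2]

theorem lipschitzOnWith_first (hC : IsCopula C) (hv : v ∈ Icc (0:ℝ) 1) :
    LipschitzOnWith 1 (fun u => C u v) (Icc 0 1) := by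
  refine LipschitzOnWith.of_le_add fun x hx y hy => ?_
  rcases le_total x y with hxy | hxy
  · linarith [hC.monotoneOn_first hv hx hy hxy, dist_nonneg (x := x) (y := y)]
  · linarith [hC.sub_le_of_le_first hv hy hx hxy, le_abs_self (x - y), Real.dist_eq x y]

theorem markovProduct_lowerFrechet (hC : IsCopula C) (hu : u ∈ Icc (0:ℝ) 1)
    (hv : v ∈ Icc (0:ℝ) 1) :
    MarkovProduct lowerFrechet C u v = v - C (1 - u) v := by
  rw [markovProduct_lowerFrechet_apply (hC.lipschitzOnWith_first hv) hu, (hC.2.1 v hv).2]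

theorem deriv_markovProduct_lowerFrechet (hC : IsCopula C)
    (hu : u ∈ Ioo (0:ℝ) 1) (hv : v ∈ Icc (0:ℝ) 1) :
    deriv (fun s => MarkovProduct lowerFrechet C s v) u = deriv (fun s => C s v) (1 - u) := by
  have hD : (fun s => MarkovProduct lowerFrechet C s v) =ᶠ[𝓝 u] fun s => v - C (1 - s) v := by
    filter_upwards [isOpen_Ioo.mem_nhds hu] with s hs
    exact hC.markovProduct_lowerFrechet (Ioo_subset_Icc_self hs) hv
  rw [hD.deriv_eq, deriv_const_sub, deriv_comp_const_sub (f := fun s => C s v), neg_neg]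

theorem ae_deriv_markovProduct_lowerFrechet (hC : IsCopula C) (hv : v ∈ Icc (0:ℝ) 1) :
    ∀ᵐ u ∂(volume.restrict (Icc (0:ℝ) 1)),
      deriv (fun s => MarkovProduct lowerFrechet C s v) u = deriv (fun s => C s v) (1 - u) := by
  rw [← Measure.restrict_congr_set Ioo_ae_eq_Icc]
  exact ae_restrict_of_forall_mem measurableSet_Ioo fun u hu =>
    hC.deriv_markovProduct_lowerFrechet hu hv

theorem stochIncr_iff_stochDecr_markovProduct_lowerFrechet (hC : IsCopula C) :
    StochIncr C ↔ StochDecr (MarkovProduct lowerFrechet C) := by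
  refine ⟨fun hSI v hv => ((hSI v hv).convexOn_const_sub_comp_one_sub v).congr fun u hu => ?_,
    fun hSD v hv => ((hSD v hv).concaveOn_const_sub_comp_one_sub v).congr fun u hu => ?_⟩
  · exact (hC.markovProduct_lowerFrechet hu hv).symm
  · have hu' : 1 - u ∈ Icc (0:ℝ) 1 := Icc.mem_iff_one_sub_mem.mp hu
    simp only [hC.markovProduct_lowerFrechet hu' hv, sub_sub_cancel]

theorem lipschitzOnWith_markovProduct_lowerFrechet (hC : IsCopula C) (hv : v ∈ Icc (0:ℝ) 1) :
    LipschitzOnWith 1 (fun u => MarkovProduct lowerFrechet C u v) (Icc 0 1) := by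
  refine LipschitzOnWith.mk_one fun x hx y hy => ?_
  have hx' : 1 - x ∈ Icc (0:ℝ) 1 := Icc.mem_iff_one_sub_mem.mp hx
  have hy' : 1 - y ∈ Icc (0:ℝ) 1 := Icc.mem_iff_one_sub_mem.mp hy
  rw [hC.markovProduct_lowerFrechet hx hv, hC.markovProduct_lowerFrechet hy hv,
    dist_sub_left, ← dist_sub_left (1:ℝ) x y]
  simpa using (hC.lipschitzOnWith_first hv).dist_le_mul _ hx' _ hy'

theorem markovProduct_lowerFrechet_markovProduct_lowerFrechet (hC : IsCopula C)
    (hu : u ∈ Icc (0:ℝ) 1) (hv : v ∈ Icc (0:ℝ) 1) :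
    MarkovProduct lowerFrechet (MarkovProduct lowerFrechet C) u v = C u v := by
  have hu' : 1 - u ∈ Icc (0:ℝ) 1 := Icc.mem_iff_one_sub_mem.mp hu
  rw [markovProduct_lowerFrechet_apply (hC.lipschitzOnWith_markovProduct_lowerFrechet hv) hu,
    hC.markovProduct_lowerFrechet (right_mem_Icc.2 zero_le_one) hv,
    hC.markovProduct_lowerFrechet hu' hv, sub_self, (hC.2.1 v hv).1, sub_sub_cancel,
    sub_zero, sub_sub_cancel]

end IsCopula

theorem involution_lowerFrechet (C : ℝ → ℝ → ℝ) (hC : IsCopula C) :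
    (∀ v ∈ Icc (0:ℝ) 1, ∀ᵐ u ∂(volume.restrict (Icc (0:ℝ) 1)),
      deriv (fun s => MarkovProduct (fun x y => max (x + y - 1) 0) C s v) u
        = deriv (fun s => C s v) (1 - u)) ∧
    (StochIncr C ↔ StochDecr (MarkovProduct (fun x y => max (x + y - 1) 0) C)) ∧
    (∀ u ∈ Icc (0:ℝ) 1, ∀ v ∈ Icc (0:ℝ) 1,
      MarkovProduct (fun x y => max (x + y - 1) 0)
        (MarkovProduct (fun x y => max (x + y - 1) 0) C) u v = C u v) :=
  ⟨fun _ hv => hC.ae_deriv_markovProduct_lowerFrechet hv,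
    hC.stochIncr_iff_stochDecr_markovProduct_lowerFrechet,
    fun _ hu _ hv => hC.markovProduct_lowerFrechet_markovProduct_lowerFrechet hu hv⟩
end

section
/- If C₁ is stochastically increasing in the first component and C₂ is stochastically decreasing in the first component (or vice versa), then the Markov product C₁ * C₂ is stochastically decreasing in the first component; if both are stochastically decreasing, C₁ * C₂ is stochastically increasing. -/
open MeasureTheory Set Filter

/-
For `a, b ≥ 0` with `a + b = 1` let `ψ s = C₁ (a x + b y) s - (a C₁ x s + b C₁ y s)` be the Jensen
gap of `C₁` in its first variable. By linearity of the Markov product in its first factor, the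
Jensen gap of `C₁ * C₂` at `v` is `∫₀¹ ψ' g` with `g = ∂₁C₂(·, v)`. The function `ψ` is Lipschitz,
vanishes at `0` and `1`, and has the sign given by the concavity or convexity of `C₁`; `g` is
a.e. monotone, increasing or decreasing according to the convexity or concavity of `C₂`.
Formally `∫ ψ' g = -∫ ψ dg`, whose sign is then clear. Since `g` is only monotone, this integration
by parts is done through difference quotients: by translation invariance
`∫ (ψ (t + h) - ψ t) g t dt = ∫ ψ t (g (t - h) - g t) dt`, and the right-hand integrand has a sign.
-/

open NNReal

theorem LipschitzWith.integral_deriv_mul_nonpos {φ g : ℝ → ℝ} {K : ℝ≥0} {D : Set ℝ}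
    (hφ : LipschitzWith K φ) (hφc : HasCompactSupport φ) (hg : Integrable g)
    (hD : ∀ᵐ x, x ∈ D) (hsign : ∀ x ∈ D, ∀ y ∈ D, y ≤ x → φ x * (g y - g x) ≤ 0) :
    ∫ x, deriv φ x * g x ≤ 0 := by
  have hlim := hφ.integral_inv_smul_sub_mul_tendsto_integral_lineDeriv_mul (μ := volume) hg 1
  have hline : ∀ x, lineDeriv ℝ φ x 1 = deriv φ x := fun x => by
    simp [lineDeriv, deriv_comp_const_add]
  simp only [hline, smul_eq_mul, mul_one] at hlim
  refine le_of_tendsto hlim ?_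
  filter_upwards [self_mem_nhdsWithin] with t (ht : 0 < t)
  obtain ⟨C, hC⟩ := hφ.continuous.bounded_above_of_compact_support hφc
  have hint : ∀ s : ℝ, Integrable (fun x => φ (x + s) * g x) := fun s =>
    hg.bdd_mul ((hφ.continuous.comp (continuous_add_const s)).aestronglyMeasurable)
      (.of_forall fun x => hC _)
  have hint' : Integrable (fun x => φ x * g (x - t)) := by
    simpa using (hint t).comp_sub_right t
  have hshift : ∫ x, φ (x + t) * g x = ∫ x, φ x * g (x - t) := by
    simpa using integral_add_right_eq_self (fun x => φ x * g (x - t)) t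
  have hD' : ∀ᵐ x, x - t ∈ D :=
    (measurePreserving_sub_right volume t).quasiMeasurePreserving.ae hD
  calc ∫ x, t⁻¹ * (φ (x + t) - φ x) * g x
      = t⁻¹ * ∫ x, φ x * (g (x - t) - g x) := by
        simp_rw [mul_assoc, integral_const_mul, sub_mul, mul_sub]
        rw [integral_sub (hint t) (by simpa using hint 0), hshift,
          integral_sub hint' (by simpa using hint 0)]
    _ ≤ 0 := by
        refine mul_nonpos_of_nonneg_of_nonpos (inv_nonneg.2 ht.le) (integral_nonpos_of_ae ?_)
        filter_upwards [hD, hD'] with x hx hx'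
        exact hsign x hx _ hx' (by linarith)

theorem LipschitzOnWith.intervalIntegrable_deriv_mul {ψ g : ℝ → ℝ} {a b : ℝ} {K : ℝ≥0}
    (hab : a ≤ b) (hψ : LipschitzOnWith K ψ (Icc a b)) (hg : IntegrableOn g (Ioo a b)) :
    IntervalIntegrable (fun x => deriv ψ x * g x) volume a b := by
  rw [intervalIntegrable_iff_integrableOn_Ioo_of_le hab]
  refine hg.bdd_mul (measurable_deriv ψ).aestronglyMeasurable (c := K) ?_
  filter_upwards [ae_restrict_mem measurableSet_Ioo] with x hx
  exact norm_deriv_le_of_lipschitzOn (Icc_mem_nhds hx.1 hx.2) hψ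

theorem intervalIntegral_deriv_mul_nonpos_of_monotoneOn {ψ g : ℝ → ℝ} {a b m : ℝ} {K : ℝ≥0}
    {D : Set ℝ} (hab : a ≤ b) (hψ : LipschitzOnWith K ψ (Icc a b)) (hψa : ψ a = 0)
    (hψb : ψ b = 0) (hψ_nonneg : ∀ x ∈ Icc a b, 0 ≤ ψ x) (hg : IntegrableOn g (Ioo a b))
    (hD : ∀ᵐ x, x ∈ Ioo a b → x ∈ D) (hgD : MonotoneOn g D) (hm : ∀ x ∈ D, m ≤ g x) :
    ∫ x in a..b, deriv ψ x * g x ≤ 0 := by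
  set φ := IccExtend hab ((Icc a b).domRestrict ψ)
  have hφ_out : ∀ x ∉ Ioo a b, φ x = 0 := fun x hx => by
    rcases le_or_gt x a with hxa | hax
    · simpa [φ, IccExtend_of_le_left hab _ hxa] using hψa
    · have hbx : b ≤ x := not_lt.1 fun hxb => hx ⟨hax, hxb⟩
      simpa [φ, IccExtend_of_right_le hab _ hbx] using hψb
  have hφ_in : ∀ x ∈ Icc a b, φ x = ψ x := fun x hx => IccExtend_of_mem hab _ hx
  have hderiv : ∀ x ∈ Ioo a b, deriv φ x = deriv ψ x := fun x hx =>
    Filter.EventuallyEq.deriv_eq <| eventually_of_mem (Icc_mem_nhds hx.1 hx.2) hφ_in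
  -- `g - m ≥ 0` on `D`, so extending it by zero left of `a` keeps it monotone where `φ ≠ 0`
  set g' := indicator (Ioo a b) (fun x => g x - m)
  have key : ∫ x, deriv φ x * g' x ≤ 0 := by
    refine (hψ.to_restrict.comp (LipschitzWith.projIcc hab)).integral_deriv_mul_nonpos
      (.intro isCompact_Icc fun x hx => hφ_out x fun h => hx (Ioo_subset_Icc_self h))
      ((integrable_indicator_iff measurableSet_Ioo).2
        (hg.sub (integrableOn_const measure_Ioo_lt_top.ne)))
      (D := D ∪ (Ioo a b)ᶜ) ?_ ?_
    · filter_upwards [hD] with x hx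
      by_cases h : x ∈ Ioo a b
      · exact Or.inl (hx h)
      · exact Or.inr h
    · intro x hx y hy hyx
      by_cases hxI : x ∈ Ioo a b
      · have hxD : x ∈ D := hx.resolve_right (not_not.2 hxI)
        rw [hφ_in x (Ioo_subset_Icc_self hxI)]
        refine mul_nonpos_of_nonneg_of_nonpos (hψ_nonneg x (Ioo_subset_Icc_self hxI)) ?_
        by_cases hyI : y ∈ Ioo a b
        · have hyD : y ∈ D := hy.resolve_right (not_not.2 hyI)
          simp only [g', indicator_of_mem hyI, indicator_of_mem hxI]
          linarith [hgD hyD hxD hyx]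
        · simp only [g', indicator_of_notMem hyI, indicator_of_mem hxI]
          linarith [hm x hxD]
      · simp [hφ_out x hxI]
  have hψ_ac : AbsolutelyContinuousOnInterval ψ a b :=
    (uIcc_of_le hab ▸ hψ).absolutelyContinuousOnInterval
  have hψm : IntervalIntegrable (fun x => deriv ψ x * m) volume a b :=
    hψ_ac.intervalIntegrable_deriv.mul_const m
  calc ∫ x in a..b, deriv ψ x * g x
      = ∫ x in a..b, deriv ψ x * (g x - m) := by
        simp_rw [mul_sub]
        rw [intervalIntegral.integral_sub (hψ.intervalIntegrable_deriv_mul hab hg) hψm,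
          intervalIntegral.integral_mul_const, hψ_ac.integral_deriv_eq_sub, hψa, hψb,
          sub_zero, zero_mul, sub_zero]
    _ = ∫ x, deriv φ x * g' x := by
        simp_rw [g', ← indicator_mul_right]
        rw [integral_indicator measurableSet_Ioo, intervalIntegral.integral_of_le hab,
          integral_Ioc_eq_integral_Ioo]
        exact setIntegral_congr_fun measurableSet_Ioo fun x hx => by rw [hderiv x hx]
    _ ≤ 0 := key

theorem ConvexOn.monotoneOn_deriv_of_differentiableAt {f : ℝ → ℝ} {S : Set ℝ}
    (hf : ConvexOn ℝ S f) : MonotoneOn (deriv f) {x ∈ S | DifferentiableAt ℝ f x} := by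
  intro x hx y hy hxy
  rcases hxy.eq_or_lt with rfl | hlt
  · rfl
  · exact (hf.deriv_le_slope hx.1 hy.1 hlt hx.2).trans (hf.slope_le_deriv hx.1 hy.1 hlt hy.2)

section DerivMulDeriv

variable {ψ f : ℝ → ℝ} {a b : ℝ} {K L : ℝ≥0}

theorem ConvexOn.intervalIntegral_deriv_mul_deriv_nonpos
    (hab : a ≤ b) (hf : ConvexOn ℝ (Icc a b) f) (hfL : LipschitzOnWith L f (Icc a b))
    (hψ : LipschitzOnWith K ψ (Icc a b)) (hψa : ψ a = 0) (hψb : ψ b = 0)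
    (hψ_nonneg : ∀ x ∈ Icc a b, 0 ≤ ψ x) :
    ∫ x in a..b, deriv ψ x * deriv f x ≤ 0 := by
  have hf_ac : AbsolutelyContinuousOnInterval f a b :=
    (uIcc_of_le hab ▸ hfL).absolutelyContinuousOnInterval
  refine intervalIntegral_deriv_mul_nonpos_of_monotoneOn hab hψ hψa hψb hψ_nonneg
    ((intervalIntegrable_iff_integrableOn_Ioo_of_le hab).1 hf_ac.intervalIntegrable_deriv)
    (D := {x ∈ Ioo a b | DifferentiableAt ℝ f x}) (m := -L) ?_
    ((hf.subset Ioo_subset_Icc_self (convex_Ioo a b)).monotoneOn_deriv_of_differentiableAt)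
    fun x hx => neg_le_of_abs_le (norm_deriv_le_of_lipschitzOn (Icc_mem_nhds hx.1.1 hx.1.2) hfL)
  filter_upwards [hf_ac.ae_differentiableAt] with x hx hxI
  exact ⟨hxI, hx (uIcc_of_le hab ▸ Ioo_subset_Icc_self hxI)⟩

theorem ConvexOn.intervalIntegral_deriv_mul_deriv_nonneg
    (hab : a ≤ b) (hf : ConvexOn ℝ (Icc a b) f) (hfL : LipschitzOnWith L f (Icc a b))
    (hψ : LipschitzOnWith K ψ (Icc a b)) (hψa : ψ a = 0) (hψb : ψ b = 0)
    (hψ_nonpos : ∀ x ∈ Icc a b, ψ x ≤ 0) :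
    0 ≤ ∫ x in a..b, deriv ψ x * deriv f x := by
  have := hf.intervalIntegral_deriv_mul_deriv_nonpos hab hfL hψ.neg (by simp [hψa])
    (by simp [hψb]) fun x hx => neg_nonneg.2 (hψ_nonpos x hx)
  simpa [deriv.fun_neg] using this

theorem ConcaveOn.intervalIntegral_deriv_mul_deriv_nonpos
    (hab : a ≤ b) (hf : ConcaveOn ℝ (Icc a b) f) (hfL : LipschitzOnWith L f (Icc a b))
    (hψ : LipschitzOnWith K ψ (Icc a b)) (hψa : ψ a = 0) (hψb : ψ b = 0)
    (hψ_nonpos : ∀ x ∈ Icc a b, ψ x ≤ 0) :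
    ∫ x in a..b, deriv ψ x * deriv f x ≤ 0 := by
  have := hf.neg.intervalIntegral_deriv_mul_deriv_nonneg hab hfL.neg hψ hψa hψb hψ_nonpos
  simpa [deriv.neg] using this

end DerivMulDeriv

theorem IsCopula.swap_s7 {C : ℝ → ℝ → ℝ} (hC : IsCopula C) : IsCopula fun u v => C v u :=
  ⟨hC.2.1, hC.1, fun u₁ u₂ v₁ v₂ hu₁ hu₂ hv₁ hv₂ hu hv => by
    linarith [hC.2.2 v₁ v₂ u₁ u₂ hv₁ hv₂ hu₁ hu₂ hv hu]⟩

theorem IsCopula.lipschitzOnWith_snd {C : ℝ → ℝ → ℝ} (hC : IsCopula C) {u : ℝ}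
    (hu : u ∈ Icc (0:ℝ) 1) : LipschitzOnWith 1 (C u) (Icc 0 1) := by
  -- the rectangles `[0, u] × [s, r]` and `[u, 1] × [s, r]` have nonnegative mass
  have key : ∀ s ∈ Icc (0:ℝ) 1, ∀ r ∈ Icc (0:ℝ) 1, s ≤ r → |C u r - C u s| ≤ r - s := by
    intro s hs r hr hsr
    have h₀ := hC.2.2 0 u s r ⟨le_rfl, zero_le_one⟩ hu hs hr hu.1 hsr
    have h₁ := hC.2.2 u 1 s r hu ⟨zero_le_one, le_rfl⟩ hs hr hu.2 hsr
    rw [(hC.2.1 s hs).1, (hC.2.1 r hr).1] at h₀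
    rw [(hC.2.1 s hs).2, (hC.2.1 r hr).2] at h₁
    exact abs_le.2 ⟨by linarith, by linarith⟩
  refine .of_dist_le_mul fun s hs r hr => ?_
  rw [Real.dist_eq, Real.dist_eq, NNReal.coe_one, one_mul]
  rcases le_total s r with h | h
  · rw [abs_sub_comm, abs_sub_comm s, abs_of_nonneg (sub_nonneg.2 h)]
    exact key s hs r hr h
  · rw [abs_of_nonneg (sub_nonneg.2 h)]
    exact key r hr s hs h

theorem IsCopula.lipschitzOnWith_fst {C : ℝ → ℝ → ℝ} (hC : IsCopula C) {v : ℝ}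
    (hv : v ∈ Icc (0:ℝ) 1) : LipschitzOnWith 1 (fun u => C u v) (Icc 0 1) :=
  hC.swap_s7.lipschitzOnWith_snd hv

def jensenGap (F : ℝ → ℝ → ℝ) (a b x y s : ℝ) : ℝ :=
  F (a * x + b * y) s - (a * F x s + b * F y s)

theorem convexOn_iff_jensenGap_nonpos {F : ℝ → ℝ → ℝ} {S : Set ℝ} (hS : Convex ℝ S) {v : ℝ} :
    ConvexOn ℝ S (fun u => F u v) ↔
      ∀ x ∈ S, ∀ y ∈ S, ∀ a b : ℝ, 0 ≤ a → 0 ≤ b → a + b = 1 → jensenGap F a b x y v ≤ 0 := by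
  simp [ConvexOn, jensenGap, hS]

theorem concaveOn_iff_jensenGap_nonneg {F : ℝ → ℝ → ℝ} {S : Set ℝ} (hS : Convex ℝ S) {v : ℝ} :
    ConcaveOn ℝ S (fun u => F u v) ↔
      ∀ x ∈ S, ∀ y ∈ S, ∀ a b : ℝ, 0 ≤ a → 0 ≤ b → a + b = 1 → 0 ≤ jensenGap F a b x y v := by
  simp [ConcaveOn, jensenGap, hS]

section jensenGap

variable {C : ℝ → ℝ → ℝ} {a b x y : ℝ}

theorem IsCopula.jensenGap_zero (hC : IsCopula C) (hx : x ∈ Icc (0:ℝ) 1)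
    (hy : y ∈ Icc (0:ℝ) 1) (hu : a * x + b * y ∈ Icc (0:ℝ) 1) : jensenGap C a b x y 0 = 0 := by
  simp [jensenGap, (hC.1 _ hx).1, (hC.1 _ hy).1, (hC.1 _ hu).1]

theorem IsCopula.jensenGap_one (hC : IsCopula C) (hx : x ∈ Icc (0:ℝ) 1)
    (hy : y ∈ Icc (0:ℝ) 1) (hu : a * x + b * y ∈ Icc (0:ℝ) 1) : jensenGap C a b x y 1 = 0 := by
  simp [jensenGap, (hC.1 _ hx).2, (hC.1 _ hy).2, (hC.1 _ hu).2]

theorem IsCopula.lipschitzOnWith_jensenGap (hC : IsCopula C) (hx : x ∈ Icc (0:ℝ) 1)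
    (hy : y ∈ Icc (0:ℝ) 1) (hu : a * x + b * y ∈ Icc (0:ℝ) 1) :
    LipschitzOnWith (1 + (‖a‖₊ + ‖b‖₊)) (jensenGap C a b x y) (Icc 0 1) := by
  have := (hC.lipschitzOnWith_snd hu).sub
    (((lipschitzWith_smul a).comp_lipschitzOnWith (hC.lipschitzOnWith_snd hx)).add
      ((lipschitzWith_smul b).comp_lipschitzOnWith (hC.lipschitzOnWith_snd hy)))
  simp only [Function.comp_def, smul_eq_mul, mul_one] at this
  exact this

end jensenGap

theorem IsCopula.jensenGap_markovProduct {C₁ C₂ : ℝ → ℝ → ℝ} (h₁ : IsCopula C₁)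
    (h₂ : IsCopula C₂) {a b x y v : ℝ} (hv : v ∈ Icc (0:ℝ) 1) (hx : x ∈ Icc (0:ℝ) 1)
    (hy : y ∈ Icc (0:ℝ) 1) (hu : a * x + b * y ∈ Icc (0:ℝ) 1) :
    jensenGap (MarkovProduct C₁ C₂) a b x y v =
      ∫ t in (0:ℝ)..1, deriv (jensenGap C₁ a b x y) t * deriv (fun s => C₂ s v) t := by
  set g := deriv fun s => C₂ s v
  have hg : IntegrableOn g (Ioo 0 1) :=
    (intervalIntegrable_iff_integrableOn_Ioo_of_le zero_le_one).1
      (uIcc_of_le (zero_le_one (α := ℝ)) ▸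
        h₂.lipschitzOnWith_fst hv).absolutelyContinuousOnInterval.intervalIntegrable_deriv
  have hint : ∀ u ∈ Icc (0:ℝ) 1, IntervalIntegrable (fun t => deriv (C₁ u) t * g t) volume 0 1 :=
    fun u hu => (h₁.lipschitzOnWith_snd hu).intervalIntegrable_deriv_mul zero_le_one hg
  have hdiff : ∀ u ∈ Icc (0:ℝ) 1, ∀ᵐ t, t ∈ uIcc 0 1 → DifferentiableAt ℝ (C₁ u) t :=
    fun u hu => (uIcc_of_le (zero_le_one (α := ℝ)) ▸
      h₁.lipschitzOnWith_snd hu).absolutelyContinuousOnInterval.ae_differentiableAt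
  have hderiv : ∀ᵐ t, t ∈ uIoc 0 1 → deriv (jensenGap C₁ a b x y) t * g t =
      deriv (C₁ (a * x + b * y)) t * g t -
        (a * (deriv (C₁ x) t * g t) + b * (deriv (C₁ y) t * g t)) := by
    filter_upwards [hdiff _ hu, hdiff x hx, hdiff y hy] with t hu' hx' hy' ht
    have ht' := uIoc_subset_uIcc ht
    have hd : HasDerivAt (jensenGap C₁ a b x y)
        (deriv (C₁ (a * x + b * y)) t - (a * deriv (C₁ x) t + b * deriv (C₁ y) t)) t :=
      (hu' ht').hasDerivAt.sub (((hx' ht').hasDerivAt.const_mul a).add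
        ((hy' ht').hasDerivAt.const_mul b))
    rw [hd.deriv]
    ring
  rw [intervalIntegral.integral_congr_ae hderiv, intervalIntegral.integral_sub (hint _ hu)
    (((hint x hx).const_mul a).add ((hint y hy).const_mul b)),
    intervalIntegral.integral_add ((hint x hx).const_mul a) ((hint y hy).const_mul b),
    intervalIntegral.integral_const_mul, intervalIntegral.integral_const_mul]
  rfl

theorem stochMonotone_markovProduct_mixed (C₁ C₂ : ℝ → ℝ → ℝ)
    (h₁ : IsCopula C₁) (h₂ : IsCopula C₂) :
    (StochIncr C₁ → StochDecr C₂ → StochDecr (MarkovProduct C₁ C₂)) ∧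
    (StochDecr C₁ → StochIncr C₂ → StochDecr (MarkovProduct C₁ C₂)) ∧
    (StochDecr C₁ → StochDecr C₂ → StochIncr (MarkovProduct C₁ C₂)) := by
  have hI := convex_Icc (𝕜 := ℝ) (0:ℝ) 1
  have hmem : ∀ {a b x y : ℝ}, x ∈ Icc (0:ℝ) 1 → y ∈ Icc (0:ℝ) 1 → 0 ≤ a → 0 ≤ b →
      a + b = 1 → a * x + b * y ∈ Icc (0:ℝ) 1 := fun hx hy ha hb hab => by
    simpa using hI hx hy ha hb hab
  refine ⟨fun hI₁ hD₂ v hv => ?_, fun hD₁ hI₂ v hv => ?_, fun hD₁ hD₂ v hv => ?_⟩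
  · refine (convexOn_iff_jensenGap_nonpos hI).2 fun x hx y hy a b ha hb hab => ?_
    have hu := hmem hx hy ha hb hab
    rw [h₁.jensenGap_markovProduct h₂ hv hx hy hu]
    exact (hD₂ v hv).intervalIntegral_deriv_mul_deriv_nonpos zero_le_one
      (h₂.lipschitzOnWith_fst hv) (h₁.lipschitzOnWith_jensenGap hx hy hu)
      (h₁.jensenGap_zero hx hy hu) (h₁.jensenGap_one hx hy hu)
      fun s hs => (concaveOn_iff_jensenGap_nonneg hI).1 (hI₁ s hs) x hx y hy a b ha hb hab
  · refine (convexOn_iff_jensenGap_nonpos hI).2 fun x hx y hy a b ha hb hab => ?_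
    have hu := hmem hx hy ha hb hab
    rw [h₁.jensenGap_markovProduct h₂ hv hx hy hu]
    exact (hI₂ v hv).intervalIntegral_deriv_mul_deriv_nonpos zero_le_one
      (h₂.lipschitzOnWith_fst hv) (h₁.lipschitzOnWith_jensenGap hx hy hu)
      (h₁.jensenGap_zero hx hy hu) (h₁.jensenGap_one hx hy hu)
      fun s hs => (convexOn_iff_jensenGap_nonpos hI).1 (hD₁ s hs) x hx y hy a b ha hb hab
  · refine (concaveOn_iff_jensenGap_nonneg hI).2 fun x hx y hy a b ha hb hab => ?_
    have hu := hmem hx hy ha hb hab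
    rw [h₁.jensenGap_markovProduct h₂ hv hx hy hu]
    exact (hD₂ v hv).intervalIntegral_deriv_mul_deriv_nonneg zero_le_one
      (h₂.lipschitzOnWith_fst hv) (h₁.lipschitzOnWith_jensenGap hx hy hu)
      (h₁.jensenGap_zero hx hy hu) (h₁.jensenGap_one hx hy hu)
      fun s hs => (convexOn_iff_jensenGap_nonpos hI).1 (hD₁ s hs) x hx y hy a b ha hb hab
end
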